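/- Let T be the tree in which at each level n exactly one vertex has n+2 children and all other vertices have exactly one child. Then the set {K(1,n−1)γ(n−1)/γ(n) : n ∈ ℕ} is unbounded, hence the forward shift S is unbounded on H^p(T) and on H^p_0(T). -/

import Mathlib

open scoped BigOperators
open Classical

/-- An infinite, locally finite rooted tree, presented combinatorially via a
parent function and a level (distance-to-root) function.  Every level is a
finite nonempty set of vertices. -/
structure HTree where
  V : Type
  root : V
  parent : V → V
  level : V → ℕ
  level_root : level root = 0
  root_of_level_zero : ∀ v, level v = 0 → v = root
  level_parent : ∀ v, v ≠ root → level (parent v) + 1 = level v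
  finite_level : ∀ n : ℕ, {v : V | level v = n}.Finite
  nonempty_level : ∀ n : ℕ, {v : V | level v = n}.Nonempty

namespace HTree

variable (T : HTree)

/-- The finite set of vertices at level `n`. -/
noncomputable def levelFinset (n : ℕ) : Finset T.V := (T.finite_level n).toFinset

/-- `γ(n)`, the number of vertices at level `n`. -/
noncomputable def gamma (n : ℕ) : ℕ := (T.levelFinset n).card

/-- The set of `m`-children of a vertex `v`. -/
noncomputable def nChildrenFinset (m : ℕ) (v : T.V) : Finset T.V :=
  (T.levelFinset (T.level v + m)).filter (fun w => T.parent^[m] w = v)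

/-- `γ(m,v)`, the number of `m`-children of `v`. -/
noncomputable def numNChildren (m : ℕ) (v : T.V) : ℕ := (T.nChildrenFinset m v).card

/-- The set of children of a vertex. -/
noncomputable def childrenFinset (v : T.V) : Finset T.V := T.nChildrenFinset 1 v

/-- `γ(1,v)`, the number of children of `v`. -/
noncomputable def numChildren (v : T.V) : ℕ := T.numNChildren 1 v

/-- `K(m,r)`, the maximal number of `m`-children among vertices at level `r`. -/
noncomputable def K (m r : ℕ) : ℕ := (T.levelFinset r).sup (fun v => T.numNChildren m v)

/-- `M_p^p(n,f)`, the `p`-th power of the `p`-th mean of `|f|` over level `n`. -/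
noncomputable def Mpp (p : ℝ) (f : T.V → ℂ) (n : ℕ) : ℝ :=
  (1 / (T.gamma n : ℝ)) * ∑ v ∈ T.levelFinset n, ‖f v‖ ^ p

/-- `M_p(n,f)`, the `p`-th mean of `|f|` over level `n`. -/
noncomputable def Mp (p : ℝ) (f : T.V → ℂ) (n : ℕ) : ℝ := (T.Mpp p f n) ^ (1 / p)

/-- Membership in the Hardy space `H^p(T)`. -/
def MemHp (p : ℝ) (f : T.V → ℂ) : Prop := ∃ C : ℝ, ∀ n : ℕ, T.Mp p f n ≤ C

/-- Membership in the little Hardy space `H^p_0(T)`. -/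
def MemHp0 (p : ℝ) (f : T.V → ℂ) : Prop :=
  Filter.Tendsto (T.Mp p f) Filter.atTop (nhds 0)

/-- The `H^p` norm, `sup_n M_p(n,f)`. -/
noncomputable def Hnorm (p : ℝ) (f : T.V → ℂ) : ℝ := ⨆ n : ℕ, T.Mp p f n

/-- The forward shift `(Sf)(v) = f(parent v)`, `(Sf)(root) = 0`. -/
noncomputable def S (f : T.V → ℂ) : T.V → ℂ := fun v => if v = T.root then 0 else f (T.parent v)

/-- The backward shift `(Bf)(v) = Σ_{w child of v} f(w)`. -/
noncomputable def B (f : T.V → ℂ) : T.V → ℂ := fun v => ∑ w ∈ T.childrenFinset v, f w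

/-- An operator `A` is bounded on the subspace described by `Mem`, with the
`H^p` norm. -/
def BoundedOn (A : (T.V → ℂ) → (T.V → ℂ)) (Mem : (T.V → ℂ) → Prop) (p : ℝ) : Prop :=
  ∃ C : ℝ, 0 ≤ C ∧ ∀ f, Mem f → Mem (A f) ∧ T.Hnorm p (A f) ≤ C * T.Hnorm p f

/-- The operator norm of `A` on the subspace described by `Mem`. -/
noncomputable def opNorm (A : (T.V → ℂ) → (T.V → ℂ)) (Mem : (T.V → ℂ) → Prop) (p : ℝ) : ℝ :=
  sInf {C : ℝ | 0 ≤ C ∧ ∀ f, Mem f → Mem (A f) ∧ T.Hnorm p (A f) ≤ C * T.Hnorm p f}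

/-- Hypercyclicity of an operator `A` on the subspace described by `Mem`. -/
def Hypercyclic (A : (T.V → ℂ) → (T.V → ℂ)) (Mem : (T.V → ℂ) → Prop) (p : ℝ) : Prop :=
  ∃ f, Mem f ∧ ∀ g, Mem g → ∀ ε : ℝ, 0 < ε →
    ∃ N : ℕ, T.Hnorm p (fun v => A^[N] f v - g v) < ε

/-!
Test `S` on the point mass `δ_v` at a vertex `v` of level `n`: its `H^p` norm is `γ(n)^(-1/p)`,
while `S δ_v` is the indicator of the children of `v`, of norm `(γ(1,v)/γ(n+1))^(1/p)`.
So a bound `‖S‖ ≤ C` on either space forces `K(1,n) γ(n) / γ(n+1) ≤ C^p` for all `n`. In this tree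
`γ(n+1) ≤ 3 γ(n)`, so that ratio is at least `(n+2)/3`.
-/

lemma _root_.Real.le_rpow_mul_of_rpow_one_div_le {p x y C : ℝ} (hp : 0 < p) (hx : 0 ≤ x)
    (hy : 0 ≤ y) (hC : 0 ≤ C) (h : x ^ (1 / p) ≤ C * y ^ (1 / p)) : x ≤ C ^ p * y := by
  have hpow := Real.rpow_le_rpow (Real.rpow_nonneg hx _) h hp.le
  rwa [Real.mul_rpow hC (Real.rpow_nonneg hy _), one_div, Real.rpow_inv_rpow hx hp.ne',
    Real.rpow_inv_rpow hy hp.ne'] at hpow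

noncomputable def shiftGrowth (n : ℕ) : ℝ := T.K 1 n * T.gamma n / T.gamma (n + 1)

section

variable {T : HTree} {p : ℝ}

lemma mem_levelFinset {n : ℕ} {v : T.V} : v ∈ T.levelFinset n ↔ T.level v = n := by
  simp [levelFinset]

lemma gamma_pos (n : ℕ) : 0 < T.gamma n := by
  obtain ⟨v, hv⟩ := T.nonempty_level n
  exact Finset.card_pos.mpr ⟨v, mem_levelFinset.mpr hv⟩

lemma exists_numNChildren_eq_K (m n : ℕ) :
    ∃ v ∈ T.levelFinset n, T.numNChildren m v = T.K m n := by
  obtain ⟨v, hv, hsup⟩ :=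
    Finset.exists_mem_eq_sup _ (Finset.card_pos.mp (gamma_pos n)) (T.numNChildren m)
  exact ⟨v, hv, hsup.symm⟩

lemma childrenFinset_subset (v : T.V) : T.childrenFinset v ⊆ T.levelFinset (T.level v + 1) :=
  Finset.filter_subset _ _

lemma mem_childrenFinset {v w : T.V} :
    w ∈ T.childrenFinset v ↔ w ≠ T.root ∧ T.parent w = v := by
  simp only [childrenFinset, nChildrenFinset, Finset.mem_filter, mem_levelFinset,
    Function.iterate_one]
  constructor
  · rintro ⟨hlevel, rfl⟩
    refine ⟨?_, rfl⟩
    rintro rfl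
    simp [T.level_root] at hlevel
  · rintro ⟨hw, rfl⟩
    exact ⟨(T.level_parent w hw).symm, rfl⟩

lemma S_indicator_singleton (v : T.V) :
    T.S (({v} : Set T.V).indicator 1) = (T.childrenFinset v : Set T.V).indicator 1 := by
  funext w
  by_cases hw : w = T.root <;> simp [S, hw, Set.indicator_apply, mem_childrenFinset]

lemma Mp_nonneg (f : T.V → ℂ) (n : ℕ) : 0 ≤ T.Mp p f n :=
  Real.rpow_nonneg (by unfold Mpp; positivity) _

lemma Mp_indicator (hp : p ≠ 0) {s : Finset T.V} {n : ℕ} (hs : s ⊆ T.levelFinset n)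
    (m : ℕ) :
    T.Mp p ((s : Set T.V).indicator 1) m =
      if m = n then ((s.card : ℝ) / T.gamma n) ^ (1 / p) else 0 := by
  have hsum : ∑ w ∈ T.levelFinset m, ‖(s : Set T.V).indicator (1 : T.V → ℂ) w‖ ^ p =
      (T.levelFinset m ∩ s).card := by
    rw [← Finset.filter_mem_eq_inter, Finset.card_filter, Nat.cast_sum]
    refine Finset.sum_congr rfl fun w _ => ?_
    by_cases hw : w ∈ s <;> simp [hw, hp]
  split_ifs with hm
  · subst hm
    rw [Mp, Mpp, hsum, Finset.inter_eq_right.mpr hs, one_div_mul_eq_div]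
  · have hdisj : T.levelFinset m ∩ s = ∅ := by
      refine Finset.eq_empty_of_forall_notMem fun w hw => hm ?_
      rw [Finset.mem_inter] at hw
      exact (mem_levelFinset.mp hw.1).symm.trans (mem_levelFinset.mp (hs hw.2))
    simp [Mp, Mpp, hsum, hdisj, hp]

section SupportedOnLevel

variable {f : T.V → ℂ} {n : ℕ} (h : ∀ m ≠ n, T.Mp p f m = 0)
include h

lemma Mp_le_Mp_of_eq_zero (m : ℕ) : T.Mp p f m ≤ T.Mp p f n := by
  by_cases hm : m = n
  · rw [hm]
  · rw [h m hm]
    exact Mp_nonneg f n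

lemma Hnorm_eq_Mp_of_eq_zero : T.Hnorm p f = T.Mp p f n :=
  le_antisymm (ciSup_le (Mp_le_Mp_of_eq_zero h))
    (le_ciSup ⟨_, Set.forall_mem_range.mpr (Mp_le_Mp_of_eq_zero h)⟩ n)

lemma memHp_of_eq_zero : T.MemHp p f :=
  ⟨_, Mp_le_Mp_of_eq_zero h⟩

lemma memHp0_of_eq_zero : T.MemHp0 p f := by
  refine tendsto_const_nhds.congr' ?_
  filter_upwards [Filter.eventually_gt_atTop n] with m hm
  exact (h m hm.ne').symm

end SupportedOnLevel

lemma Mp_indicator_eq_zero (hp : p ≠ 0) {s : Finset T.V} {n : ℕ} (hs : s ⊆ T.levelFinset n) :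
    ∀ m ≠ n, T.Mp p ((s : Set T.V).indicator 1) m = 0 := fun m hm => by
  rw [Mp_indicator hp hs, if_neg hm]

lemma Hnorm_indicator (hp : p ≠ 0) {s : Finset T.V} {n : ℕ} (hs : s ⊆ T.levelFinset n) :
    T.Hnorm p ((s : Set T.V).indicator 1) = ((s.card : ℝ) / T.gamma n) ^ (1 / p) := by
  rw [Hnorm_eq_Mp_of_eq_zero (Mp_indicator_eq_zero hp hs), Mp_indicator hp hs, if_pos rfl]

lemma singleton_subset_levelFinset (v : T.V) : {v} ⊆ T.levelFinset (T.level v) :=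
  Finset.singleton_subset_iff.mpr (mem_levelFinset.mpr rfl)

lemma memHp_indicator_singleton (hp : p ≠ 0) (v : T.V) :
    T.MemHp p (({v} : Set T.V).indicator 1) := by
  simpa using memHp_of_eq_zero (Mp_indicator_eq_zero hp (singleton_subset_levelFinset v))

lemma memHp0_indicator_singleton (hp : p ≠ 0) (v : T.V) :
    T.MemHp0 p (({v} : Set T.V).indicator 1) := by
  simpa using memHp0_of_eq_zero (Mp_indicator_eq_zero hp (singleton_subset_levelFinset v))

theorem bddAbove_shiftGrowth_of_boundedOn (hp : 0 < p)
    {Mem : (T.V → ℂ) → Prop} (hMem : ∀ v, Mem (({v} : Set T.V).indicator 1))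
    (hS : T.BoundedOn T.S Mem p) : BddAbove (Set.range T.shiftGrowth) := by
  obtain ⟨C, hC0, hC⟩ := hS
  refine ⟨C ^ p, Set.forall_mem_range.mpr fun n => ?_⟩
  obtain ⟨v, hv, hvK⟩ := T.exists_numNChildren_eq_K 1 n
  have hlevel : T.level v = n := mem_levelFinset.mp hv
  have hbound := (hC _ (hMem v)).2
  rw [S_indicator_singleton, Hnorm_indicator hp.ne' (childrenFinset_subset v),
    ← Finset.coe_singleton, Hnorm_indicator hp.ne' (singleton_subset_levelFinset v), hlevel]
    at hbound
  have hg0 : (0 : ℝ) < T.gamma n := by exact_mod_cast gamma_pos n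
  have key := Real.le_rpow_mul_of_rpow_one_div_le hp (by positivity) (by positivity) hC0 hbound
  rw [Finset.card_singleton, Nat.cast_one] at key
  calc T.shiftGrowth n = (T.childrenFinset v).card / T.gamma (n + 1) * T.gamma n := by
        rw [shiftGrowth, ← hvK, div_mul_eq_mul_div]
        rfl
    _ ≤ C ^ p * (1 / T.gamma n) * T.gamma n := by gcongr
    _ = C ^ p := by field_simp

end

lemma triangle_succ_le_three_mul (n : ℕ) :
    (n + 1) * (n + 2) / 2 + 1 ≤ 3 * (n * (n + 1) / 2 + 1) := by
  have hsucc : (n + 1) * (n + 2) / 2 = n * (n + 1) / 2 + (n + 1) := by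
    rw [show (n + 1) * (n + 2) = n * (n + 1) + (n + 1) * 2 by ring,
      Nat.add_mul_div_right _ _ two_pos]
  have hn : n ≤ n * (n + 1) / 2 * 2 + 1 := by
    rw [Nat.div_mul_cancel (Nat.even_mul_succ_self n).two_dvd]
    nlinarith
  omega

lemma shiftGrowth_ge (hgamma : ∀ n : ℕ, T.gamma n = n * (n + 1) / 2 + 1)
    (hK : ∀ n : ℕ, T.K 1 n = n + 2) (n : ℕ) : ((n : ℝ) + 2) / 3 ≤ T.shiftGrowth n := by
  have hg1 : (T.gamma (n + 1) : ℝ) ≤ 3 * T.gamma n := by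
    exact_mod_cast (hgamma (n + 1)).trans_le (hgamma n ▸ triangle_succ_le_three_mul n)
  rw [shiftGrowth, hK, le_div_iff₀ (by exact_mod_cast gamma_pos (n + 1))]
  push_cast
  nlinarith

lemma not_bddAbove_shiftGrowth (hgamma : ∀ n : ℕ, T.gamma n = n * (n + 1) / 2 + 1)
    (hK : ∀ n : ℕ, T.K 1 n = n + 2) : ¬ BddAbove (Set.range T.shiftGrowth) := by
  rintro ⟨C, hC⟩
  obtain ⟨n, hn⟩ := exists_nat_gt (3 * C)
  have := (T.shiftGrowth_ge hgamma hK n).trans (hC ⟨n, rfl⟩)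
  linarith

end HTree

/-- on the tree where at each level `n` one vertex has `n+2` children and
the rest have one child (`γ(n) = n(n+1)/2 + 1`, `K(1,n) = n+2`), the relevant set is
unbounded and the forward shift is unbounded on `H^p(T)` and on `H^p_0(T)`. -/
theorem forward_shift_unbounded_example (T : HTree) (p : ℝ) (hp : 1 ≤ p)
    (hgamma : ∀ n : ℕ, T.gamma n = n * (n + 1) / 2 + 1)
    (hK : ∀ n : ℕ, T.K 1 n = n + 2) :
    ¬ BddAbove (Set.range fun n : ℕ =>
        (T.K 1 n : ℝ) * (T.gamma n : ℝ) / (T.gamma (n + 1) : ℝ)) ∧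
    ¬ T.BoundedOn T.S (T.MemHp p) p ∧ ¬ T.BoundedOn T.S (T.MemHp0 p) p := by
  have hp0 : 0 < p := by linarith
  have hunbounded := T.not_bddAbove_shiftGrowth hgamma hK
  refine ⟨hunbounded, fun hS => hunbounded ?_, fun hS => hunbounded ?_⟩
  · exact HTree.bddAbove_shiftGrowth_of_boundedOn hp0 (HTree.memHp_indicator_singleton hp0.ne') hS
  · exact HTree.bddAbove_shiftGrowth_of_boundedOn hp0 (HTree.memHp0_indicator_singleton hp0.ne') hS
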